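/- Let ε ∈ (0,1). For each item i define the discretization set D_i = {0, 1, …, T_i} if T_i ≤ 1/ε, and D_i = {⌊εT_i⌋, ⌊2εT_i⌋, …, ⌊⌊1/ε⌋·εT_i⌋} ∪ {T_i} if T_i > 1/ε. Then for every shift vector τ* ∈ ∏_{i=1}^n {0, …, T_i − 1} there exists a shift vector τ with τ_i ∈ D_i for every i ∈ [n] such that I_max(τ) ≤ (1 + 4ε)·I_max(τ*). In particular, some D-restricted shift vector has peak inventory level at most (1 + 4ε)·OPT^disc. -/

import Mathlib

noncomputable def invLevel (T H : ℕ) (τ t : ℤ) : ℝ :=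
  (H : ℝ) * (1 - (((t - τ) % (T : ℤ) : ℤ) : ℝ) / (T : ℝ))

noncomputable def totalInv {ι : Type*} [Fintype ι] (T H : ι → ℕ) (τ : ι → ℤ) (t : ℤ) : ℝ :=
  ∑ i, invLevel (T i) (H i) (τ i) t

def cycleLen {ι : Type*} [Fintype ι] (T : ι → ℕ) : ℕ := Finset.univ.lcm T

noncomputable def Imax {ι : Type*} [Fintype ι] (T H : ι → ℕ) (τ : ι → ℤ) : ℝ :=
  sSup (totalInv T H τ '' Set.Ico (0 : ℤ) (cycleLen T : ℤ))

noncomputable def OPTdisc {ι : Type*} [Fintype ι] (T H : ι → ℕ) : ℝ :=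
  sInf (Set.range (Imax T H))

/-!
Rounding each shift `τ*_i` up to the next point of `D_i` moves it later by at most `ε T_i`; as the
sawtooth of item `i` falls with slope `H_i / T_i`, this raises its level at any time by at most
`ε H_i`, so the peak rises by at most `ε H_Σ`. On the other hand every item has average level
`H_i (T_i + 1) / (2 T_i) ≥ H_i / 2` over a cycle, so any peak is at least `H_Σ / 2`, and the
rounded peak is at most `(1 + 2ε) I_max(τ*)`. The optimum is attained on the finite box
`∏ {0, …, T_i - 1}`, because reducing shifts modulo `T_i` does not change the levels.
-/

open Finset

theorem Function.Periodic.sum_range_const_add {M : Type*} [AddCancelCommMonoid M] {f : ℤ → M}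
    {T : ℕ} (hf : Function.Periodic f T) (c : ℤ) :
    ∑ x ∈ range T, f (c + x) = ∑ x ∈ range T, f x := by
  have step : ∀ c : ℤ, ∑ x ∈ range T, f (c + 1 + x) = ∑ x ∈ range T, f (c + x) := by
    intro c
    have h := (sum_range_succ' (fun x : ℕ => f (c + x)) T).symm.trans
      (sum_range_succ (fun x : ℕ => f (c + x)) T)
    rw [Nat.cast_zero, add_zero, hf c, add_left_inj] at h
    simpa only [Nat.cast_add, Nat.cast_one, add_assoc, add_comm (1 : ℤ)] using h
  induction c using Int.induction_on with
  | zero => simp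
  | succ i ih => rw [step, ih]
  | pred i ih => rw [← ih, ← step, sub_add_cancel]

theorem Function.Periodic.sum_range_nat_mul {M : Type*} [AddCommMonoid M] {f : ℤ → M} {T : ℕ}
    (hf : Function.Periodic f T) (k : ℕ) :
    ∑ x ∈ range (k * T), f x = k • ∑ x ∈ range T, f x := by
  induction k with
  | zero => simp
  | succ k ih =>
    rw [add_mul, one_mul, sum_range_add, ih, succ_nsmul]
    congr 1
    refine sum_congr rfl fun x _ => ?_
    rw [Nat.cast_add, add_comm, Nat.cast_mul]
    exact hf.nat_mul k x

section Item

variable {T : ℕ} (H : ℕ)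

theorem invLevel_periodic (τ : ℤ) : Function.Periodic (invLevel T H τ) T := by
  intro t
  simp only [invLevel, add_sub_right_comm, Int.add_emod_right]

theorem invLevel_emod (τ t : ℤ) : invLevel T H (τ % T) t = invLevel T H τ t := by
  simp only [invLevel, Int.sub_emod t, Int.emod_emod_of_dvd _ (dvd_refl (T : ℤ))]

theorem sum_range_invLevel_add (hT : 0 < T) (τ : ℤ) :
    ∑ x ∈ range T, invLevel T H τ (τ + x) = H * (T + 1) / 2 := by
  have hterm : ∀ x ∈ range T, invLevel T H τ (τ + x) = H - H / T * x := by
    intro x hx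
    rw [invLevel, add_sub_cancel_left, Int.emod_eq_of_lt (by positivity)
      (by exact_mod_cast mem_range.1 hx)]
    push_cast
    ring
  have hgauss : (∑ x ∈ range T, (x : ℝ)) * 2 = T * (T - 1) := by
    have h := sum_range_id_mul_two T
    rw [← Nat.cast_inj (R := ℝ)] at h
    push_cast [Nat.cast_sub hT] at h
    exact h
  rw [sum_congr rfl hterm, sum_sub_distrib, sum_const, card_range, nsmul_eq_mul, ← mul_sum]
  field_simp
  linear_combination -(H : ℝ) * hgauss

theorem sum_range_invLevel_of_dvd (hT : 0 < T) (τ : ℤ) {Λ : ℕ} (hΛ : T ∣ Λ) :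
    ∑ t ∈ range Λ, invLevel T H τ t = Λ * H * (T + 1) / (2 * T) := by
  obtain ⟨k, rfl⟩ := hΛ
  rw [mul_comm T k, (invLevel_periodic H τ).sum_range_nat_mul,
    ← (invLevel_periodic H τ).sum_range_const_add τ, sum_range_invLevel_add H hT, nsmul_eq_mul]
  field_simp
  push_cast
  ring

theorem invLevel_le_invLevel_add (hT : 0 < T) {s d : ℤ} (hsd : s ≤ d) (t : ℤ) :
    invLevel T H d t ≤ invLevel T H s t + H * (d - s) / T := by
  have hTZ : (0 : ℤ) < T := by exact_mod_cast hT
  set a := (t - s) % T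
  set b := (t - d) % T
  have hmod : a - b ≡ d - s [ZMOD T] :=
    ((Int.mod_modEq _ _).sub (Int.mod_modEq _ _)).trans (by rw [sub_sub_sub_cancel_left])
  have key : a - b ≤ d - s := by
    by_contra! hlt
    have ha := Int.emod_lt_of_pos (t - s) hTZ
    have hb := Int.emod_nonneg (t - d) hTZ.ne'
    have := Int.eq_zero_of_dvd_of_nonneg_of_lt (by linarith) (by linarith) hmod.symm.dvd
    linarith
  have hkey : (a : ℝ) - b ≤ d - s := by exact_mod_cast key
  calc invLevel T H d t = H * (1 - a / T) + H * (a - b) / T := by rw [invLevel]; ring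
    _ ≤ invLevel T H s t + H * (d - s) / T := by rw [invLevel]; gcongr

end Item

section Peak

variable {ι : Type*} [Fintype ι] {T : ι → ℕ} (H : ι → ℕ)

theorem cycleLen_pos (hT : ∀ i, 0 < T i) : 0 < cycleLen T :=
  Nat.pos_of_ne_zero fun h0 =>
    let ⟨i, _, hi⟩ := Finset.lcm_eq_zero_iff.1 h0
    (hT i).ne' hi

theorem dvd_cycleLen (i : ι) : T i ∣ cycleLen T :=
  Finset.dvd_lcm (mem_univ i)

theorem totalInv_le_Imax (τ : ι → ℤ) {t : ℤ} (ht : t ∈ Set.Ico (0 : ℤ) (cycleLen T)) :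
    totalInv T H τ t ≤ Imax T H τ :=
  le_csSup ((Set.finite_Ico _ _).image _).bddAbove (Set.mem_image_of_mem _ ht)

theorem Imax_le_Imax_add (hT : ∀ i, 0 < T i) {τ σ : ι → ℤ} {c : ℝ}
    (h : ∀ t, totalInv T H τ t ≤ totalInv T H σ t + c) : Imax T H τ ≤ Imax T H σ + c := by
  have hΛ : (0 : ℤ) < cycleLen T := by exact_mod_cast cycleLen_pos hT
  refine csSup_le ((Set.nonempty_Ico.2 hΛ).image _) ?_
  rintro _ ⟨t, ht, rfl⟩
  linarith [h t, totalInv_le_Imax H σ ht]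

theorem half_sum_le_Imax (hT : ∀ i, 0 < T i) (τ : ι → ℤ) :
    (∑ i, (H i : ℝ)) / 2 ≤ Imax T H τ := by
  set Λ := cycleLen T
  have hΛ : (0 : ℝ) < Λ := by exact_mod_cast cycleLen_pos hT
  have hitem : ∀ i, (Λ : ℝ) * H i / 2 ≤ ∑ t ∈ range Λ, invLevel (T i) (H i) (τ i) t := by
    intro i
    rw [sum_range_invLevel_of_dvd (H i) (hT i) (τ i) (dvd_cycleLen i),
      div_le_div_iff₀ two_pos (by have := hT i; positivity)]
    nlinarith [mul_nonneg hΛ.le (Nat.cast_nonneg (H i) : (0 : ℝ) ≤ H i)]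
  have hlower : Λ * ((∑ i, (H i : ℝ)) / 2) ≤ ∑ t ∈ range Λ, totalInv T H τ t := by
    simp only [totalInv]
    rw [sum_comm, mul_div_assoc', mul_sum, sum_div]
    exact sum_le_sum fun i _ => hitem i
  have hupper : ∑ t ∈ range Λ, totalInv T H τ t ≤ Λ * Imax T H τ := by
    simpa using sum_le_card_nsmul (range Λ) _ _ fun t ht =>
      totalInv_le_Imax H τ ⟨Nat.cast_nonneg t, by exact_mod_cast mem_range.1 ht⟩
  exact le_of_mul_le_mul_left (hlower.trans hupper) hΛ

theorem Imax_emod (τ : ι → ℤ) : Imax T H (fun i => τ i % T i) = Imax T H τ := by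
  have h : totalInv T H (fun i => τ i % T i) = totalInv T H τ :=
    funext fun t => by simp only [totalInv, invLevel_emod]
  rw [Imax, h, Imax]

theorem exists_Imax_eq_OPTdisc (hT : ∀ i, 0 < T i) :
    ∃ τ : ι → ℤ, (∀ i, τ i ∈ Finset.Ico (0 : ℤ) (T i)) ∧ Imax T H τ = OPTdisc T H := by
  set B : Set (ι → ℤ) := Set.univ.pi fun i => Set.Ico 0 (T i)
  have hB : ∀ τ : ι → ℤ, (fun i => τ i % T i) ∈ B := fun τ i _ =>
    ⟨Int.emod_nonneg _ (by exact_mod_cast (hT i).ne'), Int.emod_lt_of_pos _ (by exact_mod_cast hT i)⟩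
  have hrange : Set.range (Imax T H) = Imax T H '' B :=
    (Set.image_subset_range _ _).antisymm' <| Set.range_subset_iff.2 fun τ =>
      ⟨_, hB τ, Imax_emod H τ⟩
  obtain ⟨τ, hτB, hτ⟩ : OPTdisc T H ∈ Imax T H '' B := by
    rw [OPTdisc, hrange]
    exact ((Set.nonempty_of_mem (hB 0)).image _).csInf_mem
      ((Set.Finite.pi fun i => Set.finite_Ico _ _).image _)
  exact ⟨τ, fun i => Finset.mem_Ico.2 (hτB i (Set.mem_univ i)), hτ⟩

end Peak

noncomputable def discretization (ε : ℝ) (T : ℕ) : Finset ℤ :=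
  if (T : ℝ) ≤ 1 / ε then Finset.Icc (0 : ℤ) (T : ℤ)
  else insert ((T : ℕ) : ℤ) ((Finset.Icc 1 ⌊1 / ε⌋₊).image fun j : ℕ => ⌊(j : ℝ) * (ε * (T : ℝ))⌋)

/-- Rounding `s` up to the grid point `⌊j ε T⌋` with `j = max 1 ⌈s / (ε T)⌉`, or to `T` when
`j > ⌊1/ε⌋`. -/
theorem exists_mem_discretization {ε : ℝ} (hε : 0 < ε) {T : ℕ} {s : ℤ} (hs0 : 0 ≤ s)
    (hsT : s < T) : ∃ d ∈ discretization ε T, s ≤ d ∧ (d : ℝ) - s ≤ ε * T := by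
  unfold discretization
  split_ifs
  · exact ⟨s, mem_Icc.2 ⟨hs0, hsT.le⟩, le_rfl, by simp only [sub_self]; positivity⟩
  have hs0' : (0 : ℝ) ≤ s := by exact_mod_cast hs0
  have hsT' : (s : ℝ) < T := by exact_mod_cast hsT
  have hεT : 0 < ε * T := mul_pos hε (by linarith)
  set m := ⌊1 / ε⌋₊
  have hTm : (T : ℝ) < (m + 1) * (ε * T) := by
    have h := mul_lt_mul_of_pos_right (Nat.lt_floor_add_one (1 / ε)) hεT
    rwa [← mul_assoc, one_div_mul_cancel hε.ne', one_mul] at h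
  set j := max 1 ⌈s / (ε * T)⌉₊
  have hsj : (s : ℝ) ≤ j * (ε * T) := by
    calc (s : ℝ) = s / (ε * T) * (ε * T) := (div_mul_cancel₀ _ hεT.ne').symm
      _ ≤ j * (ε * T) := by
        gcongr
        exact (Nat.le_ceil _).trans (by exact_mod_cast le_max_right _ _)
  have hjs : (j : ℝ) * (ε * T) ≤ s + ε * T := by
    have hj : (j : ℝ) ≤ s / (ε * T) + 1 := by
      rcases max_choice 1 ⌈s / (ε * T)⌉₊ with h | h <;> simp only [j, h]
      · simp only [Nat.cast_one, le_add_iff_nonneg_left]; positivity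
      · exact (Nat.ceil_lt_add_one (by positivity)).le
    calc (j : ℝ) * (ε * T) ≤ (s / (ε * T) + 1) * (ε * T) := by gcongr
      _ = s + ε * T := by rw [add_mul, div_mul_cancel₀ _ hεT.ne', one_mul]
  by_cases hjm : j ≤ m
  · refine ⟨⌊(j : ℝ) * (ε * T)⌋, mem_insert_of_mem (mem_image.2 ⟨j, mem_Icc.2
      ⟨le_max_left _ _, hjm⟩, rfl⟩), Int.le_floor.2 hsj, ?_⟩
    linarith [Int.floor_le ((j : ℝ) * (ε * T))]
  · refine ⟨T, mem_insert_self _ _, hsT.le, ?_⟩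
    have hmj : (m : ℝ) + 1 ≤ j := by exact_mod_cast not_le.1 hjm
    push_cast
    linarith [mul_le_mul_of_nonneg_right hmj hεT.le]

theorem exists_discretization_Imax_le {ι : Type*} [Fintype ι] {T : ι → ℕ} (H : ι → ℕ)
    (hT : ∀ i, 0 < T i) {ε : ℝ} (hε : 0 < ε) {τ : ι → ℤ}
    (hτ : ∀ i, τ i ∈ Finset.Ico (0 : ℤ) (T i)) :
    ∃ σ : ι → ℤ, (∀ i, σ i ∈ discretization ε (T i)) ∧
      Imax T H σ ≤ (1 + 2 * ε) * Imax T H τ := by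
  choose σ hσD hτσ hστ using fun i =>
    exists_mem_discretization hε (mem_Ico.1 (hτ i)).1 (mem_Ico.1 (hτ i)).2
  refine ⟨σ, hσD, ?_⟩
  have hitem : ∀ i t, invLevel (T i) (H i) (σ i) t ≤ invLevel (T i) (H i) (τ i) t + ε * H i := by
    intro i t
    have hTi : (0 : ℝ) < T i := by exact_mod_cast hT i
    have hshift : (H i : ℝ) * (σ i - τ i) / T i ≤ ε * H i := by
      rw [div_le_iff₀ hTi]
      nlinarith [hστ i, (Nat.cast_nonneg (H i) : (0 : ℝ) ≤ H i)]
    exact_mod_cast (invLevel_le_invLevel_add (H i) (hT i) (hτσ i) t).trans (by linarith)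
  have hpeak : Imax T H σ ≤ Imax T H τ + ε * ∑ i, (H i : ℝ) :=
    Imax_le_Imax_add H hT fun t => by
      simp only [totalInv, mul_sum, ← sum_add_distrib]
      exact sum_le_sum fun i _ => hitem i t
  nlinarith [half_sum_le_Imax H hT τ]

theorem stmt11_general {n : ℕ} (T H : Fin n → ℕ) (hT : ∀ i, 0 < T i)
    (ε : ℝ) (hε : ε ∈ Set.Ioo (0 : ℝ) 1)
    (D : Fin n → Finset ℤ)
    (hD : ∀ i, D i =
      if (T i : ℝ) ≤ 1 / ε then Finset.Icc (0 : ℤ) (T i : ℤ)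
      else insert ((T i : ℕ) : ℤ)
        ((Finset.Icc 1 ⌊1 / ε⌋₊).image fun j : ℕ => ⌊(j : ℝ) * (ε * (T i : ℝ))⌋)) :
    (∀ τstar : Fin n → ℤ, (∀ i, τstar i ∈ Finset.Ico (0 : ℤ) (T i : ℤ)) →
      ∃ τ : Fin n → ℤ, (∀ i, τ i ∈ D i) ∧
        Imax T H τ ≤ (1 + 4 * ε) * Imax T H τstar) ∧
    ∃ τ : Fin n → ℤ, (∀ i, τ i ∈ D i) ∧
      Imax T H τ ≤ (1 + 4 * ε) * OPTdisc T H := by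
  have hD' : ∀ i, D i = discretization ε (T i) := hD
  have hround : ∀ τstar : Fin n → ℤ, (∀ i, τstar i ∈ Finset.Ico (0 : ℤ) (T i : ℤ)) →
      ∃ τ : Fin n → ℤ, (∀ i, τ i ∈ D i) ∧ Imax T H τ ≤ (1 + 4 * ε) * Imax T H τstar := by
    intro τstar hτstar
    obtain ⟨τ, hτD, hτ⟩ := exists_discretization_Imax_le H hT hε.1 hτstar
    have hpeak : 0 ≤ Imax T H τstar :=
      (div_nonneg (sum_nonneg fun i _ => Nat.cast_nonneg (H i)) zero_le_two).trans
        (half_sum_le_Imax H hT τstar)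
    refine ⟨τ, fun i => hD' i ▸ hτD i, hτ.trans ?_⟩
    nlinarith [hε.1]
  obtain ⟨τstar, hτstar, hopt⟩ := exists_Imax_eq_OPTdisc H hT
  obtain ⟨τ, hτD, hτ⟩ := hround τstar hτstar
  exact ⟨hround, τ, hτD, hopt ▸ hτ⟩

/-- With discretization sets `D_i = {0,…,T_i}` when `T_i ≤ 1/ε`, and
`D_i = {⌊εT_i⌋, ⌊2εT_i⌋, …, ⌊⌊1/ε⌋·εT_i⌋} ∪ {T_i}` when `T_i > 1/ε`: for every shift
vector `τ* ∈ ∏ {0,…,T_i−1}` there is a `D`-restricted shift vector `τ` with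
`I_max(τ) ≤ (1+4ε)·I_max(τ*)`; in particular some `D`-restricted vector has peak
inventory level at most `(1+4ε)·OPT^disc`. -/
theorem stmt11 {n : ℕ} (T H : Fin n → ℕ) (hT : ∀ i, 0 < T i) (hH : ∀ i, 0 < H i)
    (ε : ℝ) (hε : ε ∈ Set.Ioo (0 : ℝ) 1)
    (D : Fin n → Finset ℤ)
    (hD : ∀ i, D i =
      if (T i : ℝ) ≤ 1 / ε then Finset.Icc (0 : ℤ) (T i : ℤ)
      else insert ((T i : ℕ) : ℤ)
        ((Finset.Icc 1 ⌊1 / ε⌋₊).image fun j : ℕ => ⌊(j : ℝ) * (ε * (T i : ℝ))⌋)) :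
    (∀ τstar : Fin n → ℤ, (∀ i, τstar i ∈ Finset.Ico (0 : ℤ) (T i : ℤ)) →
      ∃ τ : Fin n → ℤ, (∀ i, τ i ∈ D i) ∧
        Imax T H τ ≤ (1 + 4 * ε) * Imax T H τstar) ∧
    ∃ τ : Fin n → ℤ, (∀ i, τ i ∈ D i) ∧
      Imax T H τ ≤ (1 + 4 * ε) * OPTdisc T H :=
  stmt11_general T H hT ε hε D hD
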